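/- arXiv:2211.00145 — 2 statements merged into one kernel-verified Lean document; each statement's English description precedes it below -/
import Mathlib

section
/- For every fixed β > -1, the limit as z → 0 with Re(z) > 0 of z^{1+β} · Σ_{k≥2} (log k)^β / k^{1+z} equals Γ(1+β). -/
/-!
The summand is `f(t) = (log t)^β t^(-1-z)` sampled at the integers `k ≥ 2`. On each unit
interval, `f(k)` and `∫_k^{k+1} f` differ by at most `sup |f'|`, which is `O(t^(-3/2))`
uniformly for `|z| ≤ 1`; hence `∑_{k ≥ 2} f(k) = ∫_2^∞ f + O(1)`. The substitution `t = e^u`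
turns `∫_2^∞ f` into the Laplace transform `∫_0^∞ u^β e^(-zu) du = Γ(1+β) z^(-1-β)` minus its
piece over `[0, log 2]`, which is again `O(1)`. The Laplace transform formula is known for real
`z > 0` and extends to `Re z > 0` by analytic continuation. Multiplying by `z^(1+β)` gives
`Γ(1+β) + O(|z|^(1+β))`.
-/

open Filter Function Real Set MeasureTheory Topology

section LaplaceTransform

variable {a z : ℂ}

lemma norm_cpow_mul_cexp_neg_mul {u : ℝ} (hu : 0 < u) (a z : ℂ) :
    ‖(u : ℂ) ^ (a - 1) * Complex.exp (-(z * u))‖ = u ^ (a.re - 1) * rexp (-(z.re * u)) := by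
  rw [norm_mul, Complex.norm_cpow_eq_rpow_re_of_pos hu, Complex.norm_exp]
  simp [Complex.mul_re]

lemma continuousOn_cpow_mul_cexp_neg_mul (a z : ℂ) :
    ContinuousOn (fun u : ℝ => (u : ℂ) ^ (a - 1) * Complex.exp (-(z * u))) (Ioi 0) := by
  refine ContinuousOn.mul (fun u hu => ?_) (by fun_prop)
  exact ((continuousAt_cpow_const (Complex.ofReal_mem_slitPlane.2 hu)).comp
    Complex.continuous_ofReal.continuousAt).continuousWithinAt

lemma integrableOn_cpow_mul_cexp_neg_mul_Ioi (ha : 0 < a.re) (hz : 0 < z.re) :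
    IntegrableOn (fun u : ℝ => (u : ℂ) ^ (a - 1) * Complex.exp (-(z * u))) (Ioi 0) := by
  refine Integrable.mono'
    (integrableOn_rpow_mul_exp_neg_mul_rpow (s := a.re - 1) (by linarith) zero_lt_one hz)
    ((continuousOn_cpow_mul_cexp_neg_mul a z).aestronglyMeasurable measurableSet_Ioi) ?_
  filter_upwards [ae_restrict_mem measurableSet_Ioi] with u (hu : 0 < u)
  rw [norm_cpow_mul_cexp_neg_mul hu]
  simp

lemma differentiableOn_integral_cpow_mul_cexp_neg_mul (ha : 0 < a.re) :
    DifferentiableOn ℂ (fun z : ℂ => ∫ u in Ioi (0 : ℝ), (u : ℂ) ^ (a - 1) * Complex.exp (-(z * u)))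
      {z | 0 < z.re} := by
  intro z₀ hz₀
  have hε : 0 < z₀.re / 2 := half_pos hz₀
  have hball : ∀ z ∈ Metric.ball z₀ (z₀.re / 2), z₀.re / 2 < z.re := fun z hz => by
    have := (Complex.abs_re_le_norm (z - z₀)).trans_lt (mem_ball_iff_norm.mp hz)
    rw [Complex.sub_re, abs_lt] at this
    linarith
  refine (hasDerivAt_integral_of_dominated_loc_of_deriv_le (μ := volume.restrict (Ioi 0))
    (F' := fun z (u : ℝ) => (u : ℂ) ^ (a - 1) * Complex.exp (-(z * u)) * -(u : ℂ))
    (Metric.ball_mem_nhds z₀ hε)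
    (Eventually.of_forall fun z =>
      (continuousOn_cpow_mul_cexp_neg_mul a z).aestronglyMeasurable measurableSet_Ioi)
    (integrableOn_cpow_mul_cexp_neg_mul_Ioi ha hz₀)
    (((continuousOn_cpow_mul_cexp_neg_mul a z₀).mul (by fun_prop)).aestronglyMeasurable
      measurableSet_Ioi) ?_
    (integrableOn_rpow_mul_exp_neg_mul_rpow (s := a.re) (by linarith) zero_lt_one hε) ?_
    ).2.differentiableAt.differentiableWithinAt
  · filter_upwards [ae_restrict_mem measurableSet_Ioi] with u (hu : 0 < u) z hz
    rw [norm_mul, norm_cpow_mul_cexp_neg_mul hu, norm_neg, Complex.norm_real,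
      Real.norm_of_nonneg hu.le, rpow_one, mul_right_comm, ← rpow_add_one hu.ne', sub_add_cancel]
    gcongr
    nlinarith [hball z hz]
  · filter_upwards with u z _
    simpa [mul_assoc] using
      (((hasDerivAt_id z).mul_const (u : ℂ)).neg.cexp).const_mul ((u : ℂ) ^ (a - 1))

theorem integral_cpow_mul_cexp_neg_mul_Ioi (ha : 0 < a.re) (hz : 0 < z.re) :
    ∫ u in Ioi (0 : ℝ), (u : ℂ) ^ (a - 1) * Complex.exp (-(z * u)) = Complex.Gamma a / z ^ a := by
  have hU : IsOpen {z : ℂ | 0 < z.re} := isOpen_lt continuous_const Complex.continuous_re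
  have hG : AnalyticOnNhd ℂ (fun z : ℂ => Complex.Gamma a / z ^ a) {z | 0 < z.re} := by
    refine DifferentiableOn.analyticOnNhd (fun z (hz : 0 < z.re) => ?_) hU
    have hz0 : z ≠ 0 := fun h => by simp [h] at hz
    exact (differentiableAt_const _).div (differentiableAt_id.cpow_const (Or.inl hz))
      (by simp [Complex.cpow_eq_zero_iff, hz0]) |>.differentiableWithinAt
  refine ((differentiableOn_integral_cpow_mul_cexp_neg_mul ha).analyticOnNhd hU
    ).eqOn_of_preconnected_of_frequently_eq hG (convex_halfSpace_re_gt 0).isPreconnected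
    (z₀ := 1) (by simp) ?_ hz
  have hreal : ∀ᶠ r : ℝ in 𝓝[≠] 1, ∫ u in Ioi (0 : ℝ), (u : ℂ) ^ (a - 1) * Complex.exp (-(r * u))
      = Complex.Gamma a / (r : ℂ) ^ a := by
    filter_upwards [nhdsWithin_le_nhds (lt_mem_nhds one_pos)] with r hr
    rw [Complex.integral_cpow_mul_exp_neg_mul_Ioi ha hr, one_div, Complex.inv_cpow _ _
      (by rw [Complex.arg_ofReal_of_nonneg hr.le]; exact pi_ne_zero.symm), inv_mul_eq_div]
  have hmap : Tendsto ((↑) : ℝ → ℂ) (𝓝[≠] 1) (𝓝[≠] 1) := by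
    simpa using Complex.continuous_ofReal.continuousWithinAt.tendsto_nhdsWithin
      (x := 1) (s := {1}ᶜ) (t := {1}ᶜ) (fun r hr => by simpa using hr)
  exact hmap.frequently hreal.frequently

lemma norm_intervalIntegral_cpow_mul_cexp_neg_mul_le (ha : 0 < a.re) (hz : 0 ≤ z.re) {b : ℝ}
    (hb : 0 ≤ b) :
    ‖∫ u in (0)..b, (u : ℂ) ^ (a - 1) * Complex.exp (-(z * u))‖ ≤
      ∫ u in (0)..b, u ^ (a.re - 1) := by
  refine intervalIntegral.norm_integral_le_of_norm_le hb (ae_of_all _ fun u hu => ?_)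
    (intervalIntegral.intervalIntegrable_rpow' (by linarith))
  rw [norm_cpow_mul_cexp_neg_mul hu.1]
  exact mul_le_of_le_one_right (rpow_nonneg hu.1.le _)
    (exp_le_one_iff.2 (neg_nonpos.2 (mul_nonneg hz hu.1.le)))

end LaplaceTransform

section SumIntegralComparison

variable {E : Type*} [NormedAddCommGroup E] [NormedSpace ℝ E]

theorem norm_smul_sub_intervalIntegral_le [CompleteSpace E] {f f' : ℝ → E} {a b C : ℝ}
    (hab : a ≤ b) (hf : ∀ t ∈ Icc a b, HasDerivAt f (f' t) t) (hC : ∀ t ∈ Icc a b, ‖f' t‖ ≤ C) :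
    ‖(b - a) • f a - ∫ t in a..b, f t‖ ≤ C * (b - a) ^ 2 := by
  have hC0 : 0 ≤ C := (norm_nonneg _).trans (hC a (left_mem_Icc.2 hab))
  have hint : IntervalIntegrable f volume a b := ContinuousOn.intervalIntegrable_of_Icc hab
    fun t ht => (hf t ht).continuousAt.continuousWithinAt
  have hlip : ∀ t ∈ uIoc a b, ‖f a - f t‖ ≤ C * (b - a) := fun t ht => by
    rw [uIoc_of_le hab] at ht
    rw [norm_sub_rev]
    calc ‖f t - f a‖ ≤ C * ‖t - a‖ := Convex.norm_image_sub_le_of_norm_hasDerivWithin_le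
            (fun s hs => (hf s hs).hasDerivWithinAt) hC (convex_Icc a b) (left_mem_Icc.2 hab)
            (Ioc_subset_Icc_self ht)
      _ ≤ C * (b - a) := by
        rw [Real.norm_of_nonneg (by linarith [ht.1])]
        gcongr
        exact ht.2
  rw [← intervalIntegral.integral_const,
    ← intervalIntegral.integral_sub intervalIntegrable_const hint]
  calc _ ≤ C * (b - a) * |b - a| := intervalIntegral.norm_integral_le_of_norm_le_const hlip
    _ = C * (b - a) ^ 2 := by rw [abs_of_nonneg (sub_nonneg.2 hab)]; ring

lemma iUnion_Ioc_add_natCast (a : ℝ) : ⋃ k : ℕ, Ioc (a + k) (a + k + 1) = Ioi a := by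
  ext x
  simp only [mem_iUnion, mem_Ioc, mem_Ioi]
  constructor
  · rintro ⟨k, hk, -⟩
    linarith [k.cast_nonneg (α := ℝ)]
  · intro hx
    obtain ⟨k, hk⟩ := Nat.exists_eq_add_one_of_ne_zero (Nat.ceil_pos.2 (sub_pos.2 hx)).ne'
    have hlt := Nat.ceil_lt_add_one (sub_nonneg.2 hx.le)
    have hle := Nat.le_ceil (x - a)
    rw [hk] at hlt hle
    push_cast at hlt hle
    exact ⟨k, by linarith, by linarith⟩

theorem hasSum_intervalIntegral_add_natCast {f : ℝ → E} {a : ℝ} (hf : IntegrableOn f (Ioi a)) :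
    HasSum (fun k : ℕ => ∫ t in (a + k)..(a + k + 1), f t) (∫ t in Ioi a, f t) := by
  have hdisj : Pairwise (Disjoint on fun k : ℕ => Ioc (a + k) (a + k + 1)) := fun i j hij => by
    simpa using pairwise_disjoint_Ioc_add_intCast a (Nat.cast_injective.ne hij : (i : ℤ) ≠ j)
  simp_rw [intervalIntegral.integral_of_le (le_add_of_nonneg_right zero_le_one)]
  rw [← iUnion_Ioc_add_natCast a] at hf ⊢
  exact hasSum_integral_iUnion (fun _ => measurableSet_Ioc) hdisj hf

theorem norm_tsum_sub_integral_Ioi_le [CompleteSpace E] {f : ℝ → E} {a : ℝ} {d : ℕ → ℝ}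
    (hf : IntegrableOn f (Ioi a)) (hd : Summable d)
    (hfd : ∀ k : ℕ, ‖f (a + k) - ∫ t in (a + k)..(a + k + 1), f t‖ ≤ d k) :
    ‖∑' k : ℕ, f (a + k) - ∫ t in Ioi a, f t‖ ≤ ∑' k, d k := by
  have hI := hasSum_intervalIntegral_add_natCast hf
  have herr := (hd.of_norm_bounded hfd).hasSum
  rw [(by simpa using herr.add hI : HasSum (fun k : ℕ => f (a + k)) _).tsum_eq,
    add_sub_cancel_right]
  exact tsum_of_norm_bounded hd.hasSum hfd

end SumIntegralComparison

lemma exists_log_rpow_le_mul_rpow (p : ℝ) {ε a : ℝ} (hε : 0 < ε) (ha : 1 < a) :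
    ∃ M, ∀ t, a ≤ t → log t ^ p ≤ M * t ^ ε := by
  rcases le_or_gt p 0 with hp | hp
  · refine ⟨log a ^ p, fun t ht => ?_⟩
    calc log t ^ p ≤ log a ^ p :=
          rpow_le_rpow_of_nonpos (log_pos ha) (log_le_log (by linarith) ht) hp
      _ ≤ log a ^ p * t ^ ε :=
          le_mul_of_one_le_right (rpow_nonneg (log_nonneg ha.le) _)
            (one_le_rpow (by linarith) hε.le)
  · refine ⟨(ε / p)⁻¹ ^ p, fun t ht => ?_⟩
    have ht0 : 0 ≤ t := by linarith
    calc log t ^ p ≤ (t ^ (ε / p) / (ε / p)) ^ p :=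
          rpow_le_rpow (log_nonneg (by linarith)) (log_le_rpow_div ht0 (by positivity)) hp.le
      _ = (ε / p)⁻¹ ^ p * t ^ ε := by
        rw [div_eq_mul_inv, mul_rpow (by positivity) (by positivity), ← rpow_mul ht0,
          div_mul_cancel₀ _ hp.ne', mul_comm]

noncomputable def logPowTerm (β : ℝ) (z : ℂ) (t : ℝ) : ℂ :=
  ((log t ^ β : ℝ) : ℂ) * (t : ℂ) ^ (-(1 + z))

noncomputable def logPowTermDeriv (β : ℝ) (z : ℂ) (t : ℝ) : ℂ :=
  ((t⁻¹ * β * log t ^ (β - 1) : ℝ) : ℂ) * (t : ℂ) ^ (-(1 + z)) +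
    ((log t ^ β : ℝ) : ℂ) * (-(1 + z) * (t : ℂ) ^ (-(1 + z) - 1))

lemma hasDerivAt_logPowTerm (β : ℝ) {z : ℂ} (hz : z ≠ -1) {t : ℝ} (ht : 1 < t) :
    HasDerivAt (logPowTerm β z) (logPowTermDeriv β z t) t := by
  have hexp : -(1 + z) ≠ 0 := by
    contrapose! hz
    linear_combination -hz
  exact ((hasDerivAt_log (by linarith)).rpow_const (Or.inl (log_pos ht).ne')).ofReal_comp.mul
    (hasDerivAt_ofReal_cpow_const (by linarith) hexp)

lemma norm_logPowTermDeriv_le (β : ℝ) {z : ℂ} (hz : 0 ≤ z.re) (hz1 : ‖z‖ ≤ 1) {t : ℝ}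
    (ht : 1 < t) :
    ‖logPowTermDeriv β z t‖ ≤ (|β| * log t ^ (β - 1) + 2 * log t ^ β) * t ^ (-2 : ℝ) := by
  have ht0 : 0 < t := by linarith
  have hlog : 0 ≤ log t := log_nonneg ht.le
  have hpow₁ : ‖(t : ℂ) ^ (-(1 + z))‖ ≤ t ^ (-1 : ℝ) := by
    rw [Complex.norm_cpow_eq_rpow_re_of_pos ht0]
    exact rpow_le_rpow_of_exponent_le ht.le (by simp; linarith)
  have hpow₂ : ‖(t : ℂ) ^ (-(1 + z) - 1)‖ ≤ t ^ (-2 : ℝ) := by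
    rw [Complex.norm_cpow_eq_rpow_re_of_pos ht0]
    exact rpow_le_rpow_of_exponent_le ht.le (by simp; linarith)
  have hcoef : ‖-(1 + z)‖ ≤ 2 := by
    rw [norm_neg]
    linarith [norm_add_le (1 : ℂ) z, norm_one (α := ℂ)]
  have hinv : t⁻¹ * t ^ (-1 : ℝ) = t ^ (-2 : ℝ) := by
    rw [← rpow_neg_one, ← rpow_add ht0]; norm_num
  refine (norm_add_le _ _).trans ?_
  rw [norm_mul, norm_mul, norm_mul, Complex.norm_real, Complex.norm_real, Real.norm_eq_abs,
    Real.norm_of_nonneg (rpow_nonneg hlog _), abs_mul, abs_mul, abs_inv, abs_of_pos ht0,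
    abs_of_nonneg (rpow_nonneg hlog _)]
  calc t⁻¹ * |β| * log t ^ (β - 1) * ‖(t : ℂ) ^ (-(1 + z))‖ +
        log t ^ β * (‖-(1 + z)‖ * ‖(t : ℂ) ^ (-(1 + z) - 1)‖)
      ≤ t⁻¹ * |β| * log t ^ (β - 1) * t ^ (-1 : ℝ) + log t ^ β * (2 * t ^ (-2 : ℝ)) := by
        gcongr
    _ = (|β| * log t ^ (β - 1) + 2 * log t ^ β) * t ^ (-2 : ℝ) := by
        rw [← hinv]; ring

lemma exists_norm_logPowTermDeriv_le (β : ℝ) :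
    ∃ K, ∀ z : ℂ, 0 ≤ z.re → ‖z‖ ≤ 1 → ∀ t, 2 ≤ t →
      ‖logPowTermDeriv β z t‖ ≤ K * t ^ (-(3 / 2) : ℝ) := by
  obtain ⟨M₁, hM₁⟩ := exists_log_rpow_le_mul_rpow (β - 1) one_half_pos one_lt_two
  obtain ⟨M₂, hM₂⟩ := exists_log_rpow_le_mul_rpow β one_half_pos one_lt_two
  refine ⟨|β| * M₁ + 2 * M₂, fun z hz hz1 t ht => ?_⟩
  have ht0 : 0 < t := by linarith
  calc ‖logPowTermDeriv β z t‖ ≤ (|β| * log t ^ (β - 1) + 2 * log t ^ β) * t ^ (-2 : ℝ) :=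
        norm_logPowTermDeriv_le β hz hz1 (by linarith)
    _ ≤ (|β| * (M₁ * t ^ (1 / 2 : ℝ)) + 2 * (M₂ * t ^ (1 / 2 : ℝ))) * t ^ (-2 : ℝ) := by
        gcongr
        exacts [hM₁ t ht, hM₂ t ht]
    _ = (|β| * M₁ + 2 * M₂) * t ^ (-(3 / 2) : ℝ) := by
        rw [show (-(3 / 2) : ℝ) = 1 / 2 + -2 by norm_num, rpow_add ht0]; ring

lemma exp_smul_logPowTerm_exp (β : ℝ) (z : ℂ) {u : ℝ} (hu : 0 ≤ u) :
    rexp u • logPowTerm β z (rexp u) =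
      (u : ℂ) ^ (((1 + β : ℝ) : ℂ) - 1) * Complex.exp (-(z * u)) := by
  rw [logPowTerm, Complex.cpow_def_of_ne_zero (by exact_mod_cast (exp_pos u).ne'),
    ← Complex.ofReal_log (exp_pos u).le, log_exp, Complex.ofReal_cpow hu,
    Complex.real_smul, Complex.ofReal_exp, mul_left_comm, ← Complex.exp_add]
  congr 2
  · push_cast; ring
  · ring

lemma integral_logPowTerm_Ioi (β : ℝ) (z : ℂ) {b : ℝ} (hb : 1 ≤ b) :
    ∫ t in Ioi b, logPowTerm β z t =
      ∫ u in Ioi (log b), (u : ℂ) ^ (((1 + β : ℝ) : ℂ) - 1) * Complex.exp (-(z * u)) := by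
  rw [← exp_log (by linarith : 0 < b), ← integral_comp_exp_Ioi, log_exp]
  refine setIntegral_congr_fun measurableSet_Ioi fun u (hu : log b < u) => ?_
  exact exp_smul_logPowTerm_exp β z ((log_nonneg hb).trans hu.le)

lemma integrableOn_logPowTerm_Ioi {β : ℝ} (hβ : -1 < β) {z : ℂ} (hz : 0 < z.re) {b : ℝ}
    (hb : 1 ≤ b) : IntegrableOn (logPowTerm β z) (Ioi b) := by
  rw [← exp_log (by linarith : 0 < b), ← integrableOn_comp_exp_Ioi]
  have hF := integrableOn_cpow_mul_cexp_neg_mul_Ioi (a := ((1 + β : ℝ) : ℂ)) (by simp; linarith) hz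
  refine (hF.mono_set (Ioi_subset_Ioi (log_nonneg hb))).congr_fun
    (fun u (hu : log b < u) => ?_) measurableSet_Ioi
  exact (exp_smul_logPowTerm_exp β z ((log_nonneg hb).trans hu.le)).symm

lemma div_natCast_cpow_eq_logPowTerm (β : ℝ) (z : ℂ) (k : ℕ) :
    ((log (k + 2) ^ β : ℝ) : ℂ) / ((k + 2 : ℕ) : ℂ) ^ (1 + z) = logPowTerm β z (2 + k) := by
  rw [logPowTerm, Complex.cpow_neg, ← div_eq_mul_inv, add_comm (2 : ℝ)]
  push_cast
  rfl

lemma exists_norm_tsum_logPowTerm_sub_integral_le {β : ℝ} (hβ : -1 < β) :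
    ∃ T, ∀ z : ℂ, 0 < z.re → ‖z‖ ≤ 1 →
      ‖∑' k : ℕ, logPowTerm β z (2 + k) - ∫ t in Ioi 2, logPowTerm β z t‖ ≤ T := by
  obtain ⟨K, hK⟩ := exists_norm_logPowTermDeriv_le β
  have hK0 : 0 ≤ K := nonneg_of_mul_nonneg_left
    ((norm_nonneg _).trans (hK 0 le_rfl (by simp) 2 le_rfl)) (by positivity)
  have hd : Summable fun k : ℕ => K * (2 + k : ℝ) ^ (-(3 / 2) : ℝ) := by
    refine .mul_left K ?_
    simpa [add_comm] using
      (summable_nat_add_iff 2).2 (summable_nat_rpow.2 (by norm_num : -(3 / 2 : ℝ) < -1))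
  refine ⟨_, fun z hz hz1 => norm_tsum_sub_integral_Ioi_le
    (integrableOn_logPowTerm_Ioi hβ hz one_le_two) hd fun k => ?_⟩
  have hk : (2 : ℝ) ≤ 2 + k := by linarith [k.cast_nonneg (α := ℝ)]
  simpa using norm_smul_sub_intervalIntegral_le (by linarith : (2 + k : ℝ) ≤ 2 + k + 1)
    (fun t ht => hasDerivAt_logPowTerm β (by rintro rfl; norm_num at hz) (by linarith [ht.1]))
    (fun t ht => (hK z hz.le hz1 t (hk.trans ht.1)).trans <|
      mul_le_mul_of_nonneg_left (rpow_le_rpow_of_nonpos (by linarith) ht.1 (by norm_num)) hK0)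

theorem exists_norm_cpow_mul_tsum_sub_Gamma_le {β : ℝ} (hβ : -1 < β) :
    ∃ C, ∀ z : ℂ, 0 < z.re → ‖z‖ ≤ 1 →
      ‖z ^ ((1 + β : ℝ) : ℂ) *
            ∑' k : ℕ, ((log (k + 2) ^ β : ℝ) : ℂ) / ((k + 2 : ℕ) : ℂ) ^ (1 + z) -
          ((Real.Gamma (1 + β) : ℝ) : ℂ)‖ ≤ C * ‖z‖ ^ (1 + β) := by
  obtain ⟨T, hT⟩ := exists_norm_tsum_logPowTerm_sub_integral_le hβ
  set a : ℂ := ((1 + β : ℝ) : ℂ)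
  have ha : 0 < a.re := by simp [a]; linarith
  refine ⟨T + ∫ u in (0)..log 2, u ^ (a.re - 1), fun z hz hz1 => ?_⟩
  set head := ∫ u in (0)..log 2, (u : ℂ) ^ (a - 1) * Complex.exp (-(z * u))
  have hF := integrableOn_cpow_mul_cexp_neg_mul_Ioi ha hz
  have htail : ∫ t in Ioi 2, logPowTerm β z t = Complex.Gamma a / z ^ a - head := by
    rw [integral_logPowTerm_Ioi β z one_le_two, ← integral_cpow_mul_cexp_neg_mul_Ioi ha hz,
      ← intervalIntegral.integral_interval_add_Ioi hF
        (hF.mono_set (Ioi_subset_Ioi (log_nonneg one_le_two))), add_sub_cancel_left]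
  have hz0 : z ≠ 0 := by rintro rfl; simp at hz
  have hcancel : z ^ a * (Complex.Gamma a / z ^ a) = Complex.Gamma a :=
    mul_div_cancel₀ _ (by simp [Complex.cpow_eq_zero_iff, hz0])
  simp_rw [div_natCast_cpow_eq_logPowTerm]
  rw [← Complex.Gamma_ofReal, ← Complex.norm_cpow_real, mul_comm _ (‖z ^ a‖)]
  calc _ = ‖z ^ a‖ * ‖(∑' k : ℕ, logPowTerm β z (2 + k) - ∫ t in Ioi 2, logPowTerm β z t) -
        head‖ := by
        rw [← norm_mul, htail]
        congr 1
        linear_combination hcancel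
    _ ≤ _ := by
        gcongr
        exact (norm_sub_le _ _).trans (add_le_add (hT z hz hz1)
          (norm_intervalIntegral_cpow_mul_cexp_neg_mul_le ha hz.le (log_nonneg one_le_two)))

/-- For every fixed `β > -1`, as `z → 0` within the right half-plane `{Re z > 0}`,
`z^(1+β) * ∑_{k ≥ 2} (log k)^β / k^(1+z)` tends to `Γ(1+β)`. -/
theorem stmt0 (β : ℝ) (hβ : -1 < β) :
    Tendsto (fun z : ℂ =>
        z ^ ((1 + β : ℝ) : ℂ) *
          ∑' k : ℕ, ((Real.log (k + 2) ^ β : ℝ) : ℂ) / ((k + 2 : ℕ) : ℂ) ^ (1 + z))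
      (nhdsWithin 0 {z : ℂ | 0 < z.re})
      (nhds ((Real.Gamma (1 + β) : ℝ) : ℂ)) := by
  obtain ⟨C, hC⟩ := exists_norm_cpow_mul_tsum_sub_Gamma_le hβ
  have hbound : Tendsto (fun z : ℂ => C * ‖z‖ ^ (1 + β)) (𝓝[{z | 0 < z.re}] 0) (𝓝 0) := by
    have hcont : Continuous fun z : ℂ => C * ‖z‖ ^ (1 + β) :=
      continuous_const.mul (continuous_norm.rpow_const fun _ => Or.inr (by linarith))
    simpa [zero_rpow (by linarith : 1 + β ≠ 0)] using
      (hcont.continuousWithinAt (x := 0) (s := {z | 0 < z.re})).tendsto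
  rw [← tendsto_sub_nhds_zero_iff]
  refine squeeze_zero_norm' ?_ hbound
  filter_upwards [self_mem_nhdsWithin, nhdsWithin_le_nhds (Metric.closedBall_mem_nhds 0 one_pos)]
    with z hz hz1
  exact hC z hz (by simpa using hz1)
end

section
/- Let (η_k)_{k≥1} be i.i.d. real random variables with E η = 0, E η² = 1, and α > -1/2. With κ_α a constant depending only on α, for every ρ > 0, lim_{s→0+} (s^{1+2α}/log log(1/s))^{1/2} Σ_{k≥⌊1/s⌋+1} k^{-1/2-s} (log k)^α E[|η_k| 1_{A_{k,ρ}(s)}] = 0, where A_{k,ρ}(s) = {|η_k| > ρ (log k)^{-α} (log 1/s)^{-1} (k^{1+s}/(s^{1+2α} log log 1/s))^{1/2}}. -/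
/-!
Write `L = log (1/s)`, `c = ρ⁻¹ L (s^(1+2α) log L)^(1/2)` and `D = (2α⁺/s)^α⁺`, a bound for
`(log k)^α k^(-s/2)` once `log k ≥ 1`. For `k > 1/s`, the event `|η_k| > level_k` forces
`√k ≤ c D |η_k|`, while the weight `k^(-1/2-s) (log k)^α` is at most `D k^(-1/2)`. As
`∑_{k ≤ K} k^(-1/2) ≤ 2√K`, for each fixed value `z` of `|η|` the weights of the levels below `z`
add up to at most `2 c D² z`, so the tail sum is at most `2 c D² E η²`. After normalisation this
is `2ρ⁻¹ (2α⁺)^(2α⁺) E η² · s^(1 + 2 min(α, 0)) log(1/s)`, which tends to `0` since `α > -1/2`.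
-/

open MeasureTheory ProbabilityTheory Filter Real

theorem rpow_le_div_rpow_mul_exp {β c x : ℝ} (hβ : 0 ≤ β) (hc : 0 < c) (hx : 0 ≤ x) :
    x ^ β ≤ (β / c) ^ β * exp (c * x) := by
  rcases hβ.eq_or_lt with rfl | hβ
  · simpa using one_le_exp (by positivity : 0 ≤ c * x)
  rcases hx.eq_or_lt with rfl | hx
  · rw [zero_rpow hβ.ne']
    positivity
  have hβc : 0 < β / c := by positivity
  rw [rpow_def_of_pos hx, rpow_def_of_pos hβc, ← exp_add, exp_le_exp]
  have key : log (c * x / β) ≤ c * x / β - 1 := log_le_sub_one_of_pos (by positivity)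
  rw [log_div (by positivity) hβ.ne', log_mul hc.ne' hx.ne'] at key
  rw [log_div hβ.ne' hc.ne']
  have := mul_le_mul_of_nonneg_left key hβ.le
  field_simp at this
  nlinarith

theorem sqrt_div_mul_sqrt_mul {a b : ℝ} (ha : 0 ≤ a) (hb : 0 < b) :
    √(a / b) * √(a * b) = a := by
  rw [← sqrt_mul (div_nonneg ha hb.le), div_mul_eq_mul_div, mul_div_assoc,
    mul_div_cancel_right₀ _ hb.ne', sqrt_mul_self ha]

theorem sum_range_succ_rpow_neg_half_le (n : ℕ) :
    ∑ k ∈ Finset.range (n + 1), (k : ℝ) ^ (-(1 / 2) : ℝ) ≤ 2 * √n := by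
  induction n with
  | zero => simp
  | succ n ih =>
    rw [Finset.sum_range_succ]
    have hn : (0 : ℝ) < √(n + 1) := sqrt_pos.2 (by positivity)
    have hmono : √(n : ℝ) ≤ √(n + 1) := sqrt_le_sqrt (by linarith)
    have hsq : √((n : ℝ) + 1) ^ 2 = n + 1 := sq_sqrt (by positivity)
    have hlast : ((n + 1 : ℕ) : ℝ) ^ (-(1 / 2) : ℝ) ≤ 2 * (√(n + 1) - √n) := by
      rw [rpow_neg (by positivity), ← sqrt_eq_rpow, Nat.cast_succ,
        inv_le_iff_one_le_mul₀ hn]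
      nlinarith [sqrt_nonneg (n : ℝ), sq_sqrt (Nat.cast_nonneg (α := ℝ) n)]
    push_cast at hlast ⊢
    linarith

theorem sum_rpow_neg_half_le_of_sqrt_le {S : Finset ℕ} {X : ℝ} (hX : 0 ≤ X)
    (h : ∀ k ∈ S, √(k : ℝ) ≤ X) : ∑ k ∈ S, (k : ℝ) ^ (-(1 / 2) : ℝ) ≤ 2 * X := by
  have hS : S ⊆ Finset.range (⌊X ^ 2⌋₊ + 1) := fun k hk => by
    rw [Finset.mem_range, Nat.lt_succ_iff]
    exact Nat.le_floor ((sqrt_le_left hX).1 (h k hk))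
  calc ∑ k ∈ S, (k : ℝ) ^ (-(1 / 2) : ℝ)
      ≤ ∑ k ∈ Finset.range (⌊X ^ 2⌋₊ + 1), (k : ℝ) ^ (-(1 / 2) : ℝ) :=
        Finset.sum_le_sum_of_subset_of_nonneg hS fun k _ _ => by positivity
    _ ≤ 2 * √(⌊X ^ 2⌋₊ : ℝ) := sum_range_succ_rpow_neg_half_le _
    _ ≤ 2 * X := by
        gcongr
        rw [sqrt_le_left hX]
        exact Nat.floor_le (by positivity)

theorem tsum_mul_integral_truncated_abs_le {Ω : Type*} [MeasurableSpace Ω] {μ : Measure Ω}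
    [IsFiniteMeasure μ] {X : Ω → ℝ} (hX : MemLp X 2 μ) {w t : ℕ → ℝ}
    {C : ℝ} (h : ∀ z, 0 ≤ z → ∀ F : Finset ℕ, ∑ k ∈ F with t k < z, w k ≤ C * z) :
    ∑' k, w k * ∫ ω, (if t k < |X ω| then |X ω| else 0) ∂μ ≤ C * ∫ ω, X ω ^ 2 ∂μ := by
  set g : ℕ → Ω → ℝ := fun k ω => if t k < |X ω| then |X ω| else 0
  have hg : ∀ k, Integrable (g k) μ := fun k =>
    (hX.integrable one_le_two).abs.mono
      (Measurable.ite (measurableSet_lt measurable_const measurable_abs) measurable_abs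
        measurable_const |>.comp_aemeasurable hX.aemeasurable).aestronglyMeasurable
      (Eventually.of_forall fun ω => by
        simp only [g, norm_eq_abs]; split_ifs <;> simp)
  have hC : 0 ≤ C := by simpa using h 1 zero_le_one ∅
  refine tsum_le_of_sum_le' (mul_nonneg hC (integral_nonneg fun ω => sq_nonneg _)) fun F => ?_
  have hpoint : ∀ ω, ∑ k ∈ F, w k * g k ω ≤ C * X ω ^ 2 := fun ω => by
    calc ∑ k ∈ F, w k * g k ω = (∑ k ∈ F with t k < |X ω|, w k) * |X ω| := by
          rw [Finset.sum_filter, Finset.sum_mul]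
          refine Finset.sum_congr rfl fun k _ => ?_
          simp only [g]; split_ifs <;> simp
      _ ≤ C * |X ω| * |X ω| := by gcongr; exact h _ (abs_nonneg _) F
      _ = C * X ω ^ 2 := by rw [mul_assoc, abs_mul_abs_self, sq]
  calc ∑ k ∈ F, w k * ∫ ω, g k ω ∂μ = ∫ ω, ∑ k ∈ F, w k * g k ω ∂μ := by
        rw [integral_finsetSum _ fun k _ => (hg k).const_mul (w k)]
        simp only [integral_const_mul]
    _ ≤ ∫ ω, C * X ω ^ 2 ∂μ :=
        integral_mono (integrable_finsetSum _ fun k _ => (hg k).const_mul (w k))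
          (hX.integrable_sq.const_mul C) hpoint
    _ = C * ∫ ω, X ω ^ 2 ∂μ := integral_const_mul _ _

/-- Bounds `u ^ α * exp (-(s / 2 * u))` for `u ≥ 1`; for `α ≤ 0` it is `0 ^ 0 = 1`. -/
noncomputable def logPowBound (α s : ℝ) : ℝ := (2 * max α 0 / s) ^ max α 0

theorem logPowBound_nonneg (α : ℝ) {s : ℝ} (hs : 0 ≤ s) : 0 ≤ logPowBound α s := by
  unfold logPowBound; positivity

theorem rpow_mul_exp_neg_le_logPowBound {α s u : ℝ} (hs : 0 < s) (hu : 1 ≤ u) :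
    u ^ α * exp (-(s / 2 * u)) ≤ logPowBound α s := by
  have hβ : 0 ≤ max α 0 := le_max_right _ _
  calc u ^ α * exp (-(s / 2 * u)) ≤ u ^ max α 0 * exp (-(s / 2 * u)) := by
        gcongr
        exact le_max_left _ _
    _ ≤ (max α 0 / (s / 2)) ^ max α 0 * exp (s / 2 * u) * exp (-(s / 2 * u)) := by
        gcongr
        exact rpow_le_div_rpow_mul_exp hβ (by positivity) (by linarith)
    _ = logPowBound α s := by
        rw [mul_assoc, ← exp_add, add_neg_cancel, exp_zero, mul_one, logPowBound,
          div_div_eq_mul_div, mul_comm]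

theorem rpow_mul_logPowBound_sq {α s : ℝ} (hs : 0 < s) :
    s ^ (1 + 2 * α) * logPowBound α s ^ 2
      = (2 * max α 0) ^ (2 * max α 0) * s ^ (1 + 2 * min α 0) := by
  have hβ : 0 ≤ max α 0 := le_max_right _ _
  have hsplit : s ^ (1 + 2 * α) = s ^ (1 + 2 * min α 0) * s ^ (2 * max α 0) := by
    rw [← rpow_add hs]; congr 1; have := min_add_max α 0; linarith
  rw [logPowBound, div_rpow (by positivity) hs.le, div_pow, ← rpow_natCast, ← rpow_natCast,
    ← rpow_mul (by positivity), ← rpow_mul hs.le, hsplit]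
  push_cast
  field_simp

theorem tendsto_rpow_mul_log_mul_logPowBound_sq {α : ℝ} (hα : -(1 / 2 : ℝ) < α) :
    Tendsto (fun s => s ^ (1 + 2 * α) * log (1 / s) * logPowBound α s ^ 2)
      (nhdsWithin 0 (Set.Ioi 0)) (nhds 0) := by
  have hr : 0 < 1 + 2 * min α 0 := by linarith [lt_min hα (by norm_num : -(1 / 2 : ℝ) < 0)]
  have hlim := (tendsto_log_mul_rpow_nhdsGT_zero hr).const_mul (-(2 * max α 0) ^ (2 * max α 0))
  rw [mul_zero] at hlim
  refine hlim.congr' (eventually_nhdsWithin_of_forall fun s (hs : 0 < s) => ?_)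
  dsimp only
  rw [mul_right_comm, rpow_mul_logPowBound_sq hs, one_div, log_inv]
  ring

noncomputable def tailWeight (α s : ℝ) (k : ℕ) : ℝ := (k : ℝ) ^ (-(1 / 2 : ℝ) - s) * log k ^ α

/-- The event `A_{k,ρ}(s)` is `{truncLevel α ρ s k < |η_k|}`. -/
noncomputable def truncLevel (α ρ s : ℝ) (k : ℕ) : ℝ :=
  ρ * (log k ^ α)⁻¹ * (log (1 / s))⁻¹ *
    √((k : ℝ) ^ (1 + s) / (s ^ (1 + 2 * α) * log (log (1 / s))))

theorem one_lt_log_one_div {s : ℝ} (hs : 0 < s) (hs1 : s < exp (-1)) : 1 < log (1 / s) := by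
  rwa [lt_log_iff_exp_lt (by positivity), lt_one_div (exp_pos 1) hs, one_div, ← exp_neg]

theorem log_one_div_lt_log_of_floor_lt {s : ℝ} (hs : 0 < s) {k : ℕ} (hk : ⌊1 / s⌋₊ + 1 ≤ k) :
    log (1 / s) < log k :=
  log_lt_log (by positivity) <| (Nat.lt_floor_add_one _).trans_le (by exact_mod_cast hk)

theorem natCast_pos_of_one_le_log {k : ℕ} (hk : 1 ≤ log k) : (0 : ℝ) < k :=
  Nat.cast_pos.2 <| Nat.pos_of_ne_zero fun h => by norm_num [h] at hk

theorem tailWeight_le {α s : ℝ} (hs : 0 < s) {k : ℕ} (hk : 1 ≤ log k) :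
    tailWeight α s k ≤ logPowBound α s * (k : ℝ) ^ (-(1 / 2) : ℝ) := by
  have hk0 := natCast_pos_of_one_le_log hk
  set E := exp (-(s / 2 * log k))
  have hsplit : tailWeight α s k = (k : ℝ) ^ (-(1 / 2) : ℝ) * ((log k ^ α * E) * E) := by
    rw [tailWeight, rpow_def_of_pos hk0, rpow_def_of_pos hk0,
      show log k * (-(1 / 2) - s) = log k * (-(1 / 2)) + -(s / 2 * log k) + -(s / 2 * log k) by
        ring, exp_add, exp_add]
    ring
  have hE : E ≤ 1 := by rw [exp_le_one_iff, neg_nonpos]; positivity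
  rw [hsplit, mul_comm (logPowBound α s)]
  gcongr
  calc log k ^ α * E * E ≤ log k ^ α * E := mul_le_of_le_one_right (by positivity) hE
    _ ≤ logPowBound α s := rpow_mul_exp_neg_le_logPowBound hs hk

theorem sqrt_le_of_truncLevel_lt {α ρ s z : ℝ} (hρ : 0 < ρ) (hs : 0 < s)
    (hL : 1 < log (1 / s)) {k : ℕ} (hk : 1 ≤ log k) (hz : 0 ≤ z) (h : truncLevel α ρ s k < z) :
    √(k : ℝ) ≤ ρ⁻¹ * log (1 / s) * √(s ^ (1 + 2 * α) * log (log (1 / s))) *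
      logPowBound α s * z := by
  have hk0 := natCast_pos_of_one_le_log hk
  have hsqrt : √((k : ℝ) ^ (1 + s)) = √k * exp (s / 2 * log k) := by
    rw [sqrt_eq_rpow, sqrt_eq_rpow, ← rpow_mul hk0.le, rpow_def_of_pos hk0,
      rpow_def_of_pos hk0, ← exp_add]
    ring_nf
  have hQ : 0 < s ^ (1 + 2 * α) * log (log (1 / s)) := mul_pos (by positivity) (log_pos hL)
  rw [truncLevel, sqrt_div' _ hQ.le, hsqrt] at h
  set L := log (1 / s)
  set Q := s ^ (1 + 2 * α) * log L
  set E := exp (s / 2 * log k)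
  have hℓ : 0 < log k ^ α := by positivity
  have hL0 : 0 < L := by linarith
  have hQ' : 0 < √Q := sqrt_pos.2 hQ
  have hE : 0 < E := exp_pos _
  calc √(k : ℝ) = ρ * (log k ^ α)⁻¹ * L⁻¹ * (√k * E / √Q) *
        (ρ⁻¹ * L * √Q * log k ^ α * E⁻¹) := by
        field_simp
    _ ≤ z * (ρ⁻¹ * L * √Q * log k ^ α * E⁻¹) := by gcongr
    _ = ρ⁻¹ * L * √Q * z * (log k ^ α * exp (-(s / 2 * log k))) := by rw [exp_neg]; ring
    _ ≤ ρ⁻¹ * L * √Q * z * logPowBound α s := by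
        gcongr
        exact rpow_mul_exp_neg_le_logPowBound hs hk
    _ = _ := by ring

theorem sum_filter_truncLevel_lt_le {α ρ s z : ℝ} (hρ : 0 < ρ) (hs : 0 < s)
    (hs1 : s < exp (-1)) (hz : 0 ≤ z) (F : Finset ℕ) :
    ∑ k ∈ F with truncLevel α ρ s k < z, (if ⌊1 / s⌋₊ + 1 ≤ k then tailWeight α s k else 0)
      ≤ 2 * (ρ⁻¹ * log (1 / s) * √(s ^ (1 + 2 * α) * log (log (1 / s)))) *
          logPowBound α s ^ 2 * z := by
  have hL := one_lt_log_one_div hs hs1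
  have hlog : ∀ k : ℕ, ⌊1 / s⌋₊ + 1 ≤ k → 1 ≤ log k := fun k hk =>
    (hL.trans (log_one_div_lt_log_of_floor_lt hs hk)).le
  set c := ρ⁻¹ * log (1 / s) * √(s ^ (1 + 2 * α) * log (log (1 / s)))
  set D := logPowBound α s
  have hc : 0 ≤ c := by
    have : 0 < log (1 / s) := by linarith
    positivity
  have hD : 0 ≤ D := logPowBound_nonneg α hs.le
  rw [← Finset.sum_filter, Finset.filter_filter]
  set S := F.filter fun k => truncLevel α ρ s k < z ∧ ⌊1 / s⌋₊ + 1 ≤ k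
  have hS : ∀ k ∈ S, truncLevel α ρ s k < z ∧ ⌊1 / s⌋₊ + 1 ≤ k := fun k hk =>
    (Finset.mem_filter.1 hk).2
  calc ∑ k ∈ S, tailWeight α s k ≤ ∑ k ∈ S, D * (k : ℝ) ^ (-(1 / 2) : ℝ) :=
        Finset.sum_le_sum fun k hk => tailWeight_le hs (hlog k (hS k hk).2)
    _ = D * ∑ k ∈ S, (k : ℝ) ^ (-(1 / 2) : ℝ) := (Finset.mul_sum _ _ _).symm
    _ ≤ D * (2 * (c * D * z)) := by
        gcongr
        exact sum_rpow_neg_half_le_of_sqrt_le (by positivity) fun k hk =>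
          sqrt_le_of_truncLevel_lt hρ hs hL (hlog k (hS k hk).2) hz (hS k hk).1
    _ = 2 * c * D ^ 2 * z := by ring

noncomputable def tailSum {Ω : Type*} [MeasurableSpace Ω] (μ : Measure Ω) (η : ℕ → Ω → ℝ)
    (α ρ s : ℝ) : ℝ :=
  ∑' k : ℕ, if ⌊1 / s⌋₊ + 1 ≤ k then
    tailWeight α s k * ∫ ω, (if truncLevel α ρ s k < |η k ω| then |η k ω| else 0) ∂μ else 0

section

variable {Ω : Type*} [MeasurableSpace Ω] {μ : Measure Ω} {η : ℕ → Ω → ℝ}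

theorem tailSum_nonneg (α ρ s : ℝ) : 0 ≤ tailSum μ η α ρ s := by
  refine tsum_nonneg fun k => ?_
  split_ifs
  · refine mul_nonneg (by unfold tailWeight; positivity) (integral_nonneg fun ω => ?_)
    dsimp only
    split_ifs <;> positivity
  · exact le_rfl

theorem tailSum_le [IsFiniteMeasure μ] (hident : ∀ k, IdentDistrib (η k) (η 1) μ μ)
    (hL2 : MemLp (η 1) 2 μ) {α ρ s : ℝ} (hρ : 0 < ρ) (hs : 0 < s) (hs1 : s < exp (-1)) :
    tailSum μ η α ρ s ≤ 2 * (ρ⁻¹ * log (1 / s) * √(s ^ (1 + 2 * α) * log (log (1 / s)))) *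
      logPowBound α s ^ 2 * ∫ ω, η 1 ω ^ 2 ∂μ := by
  have hident' : ∀ k, ∫ ω, (if truncLevel α ρ s k < |η k ω| then |η k ω| else 0) ∂μ
      = ∫ ω, (if truncLevel α ρ s k < |η 1 ω| then |η 1 ω| else 0) ∂μ := fun k =>
    ((hident k).comp (Measurable.ite (measurableSet_lt measurable_const measurable_abs)
      measurable_abs measurable_const)).integral_eq
  calc tailSum μ η α ρ s
      = ∑' k, (if ⌊1 / s⌋₊ + 1 ≤ k then tailWeight α s k else 0) *
          ∫ ω, (if truncLevel α ρ s k < |η 1 ω| then |η 1 ω| else 0) ∂μ :=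
        tsum_congr fun k => by rw [hident', ite_mul, zero_mul]
    _ ≤ _ := tsum_mul_integral_truncated_abs_le hL2 fun z hz F =>
        sum_filter_truncLevel_lt_le hρ hs hs1 hz F

end

theorem stmt10_general {Ω : Type*} [MeasurableSpace Ω] (μ : Measure Ω) [IsProbabilityMeasure μ]
    (η : ℕ → Ω → ℝ) (hident : ∀ k, IdentDistrib (η k) (η 1) μ μ)
    (hL2 : MemLp (η 1) 2 μ)
    (α : ℝ) (hα : -(1/2 : ℝ) < α) (ρ : ℝ) (hρ : 0 < ρ) :
    Tendsto (fun s : ℝ =>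
        Real.sqrt (s ^ (1 + 2 * α) / Real.log (Real.log (1 / s))) *
          ∑' k : ℕ, (if ⌊1 / s⌋₊ + 1 ≤ k then
              (k : ℝ) ^ (-(1/2 : ℝ) - s) * Real.log k ^ α *
                ∫ ω, (if ρ * (Real.log k ^ α)⁻¹ * (Real.log (1 / s))⁻¹ *
                    Real.sqrt ((k : ℝ) ^ (1 + s) / (s ^ (1 + 2 * α) * Real.log (Real.log (1 / s))))
                      < |η k ω| then |η k ω| else 0) ∂μ
            else 0))
      (nhdsWithin 0 (Set.Ioi 0)) (nhds 0) := by
  have hbound := (tendsto_rpow_mul_log_mul_logPowBound_sq hα).const_mul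
    (2 / ρ * ∫ ω, η 1 ω ^ 2 ∂μ)
  rw [mul_zero] at hbound
  show Tendsto (fun s => √(s ^ (1 + 2 * α) / log (log (1 / s))) * tailSum μ η α ρ s) _ _
  refine tendsto_of_tendsto_of_tendsto_of_le_of_le' tendsto_const_nhds hbound
    (Eventually.of_forall fun s => mul_nonneg (sqrt_nonneg _) (tailSum_nonneg α ρ s)) ?_
  filter_upwards [Ioo_mem_nhdsGT (exp_pos (-1))] with s ⟨hs, hs1⟩
  calc √(s ^ (1 + 2 * α) / log (log (1 / s))) * tailSum μ η α ρ s
      ≤ √(s ^ (1 + 2 * α) / log (log (1 / s))) *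
          (2 * (ρ⁻¹ * log (1 / s) * √(s ^ (1 + 2 * α) * log (log (1 / s)))) *
            logPowBound α s ^ 2 * ∫ ω, η 1 ω ^ 2 ∂μ) := by
        gcongr
        exact tailSum_le hident hL2 hρ hs hs1
    _ = 2 / ρ * (∫ ω, η 1 ω ^ 2 ∂μ) * (s ^ (1 + 2 * α) * log (1 / s) * logPowBound α s ^ 2) := by
        have hM : 0 < log (log (1 / s)) := log_pos (one_lt_log_one_div hs hs1)
        linear_combination (2 / ρ * (∫ ω, η 1 ω ^ 2 ∂μ) * log (1 / s) * logPowBound α s ^ 2) *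
          sqrt_div_mul_sqrt_mul (a := s ^ (1 + 2 * α)) (by positivity) hM

/-- The truncated-expectation tail term vanishes on the LIL scale: for i.i.d. centered
unit-variance `(η_k)`, `α > -1/2` and every `ρ > 0`,
`(s^(1+2α)/log log(1/s))^(1/2) ∑_{k ≥ ⌊1/s⌋+1} k^(-1/2-s) (log k)^α E[|η_k| 1_{A_{k,ρ}(s)}] → 0`
as `s → 0+`, where
`A_{k,ρ}(s) = {|η_k| > ρ (log k)^(-α) (log(1/s))^(-1) (k^(1+s)/(s^(1+2α) log log(1/s)))^(1/2)}`. -/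
theorem stmt10 {Ω : Type*} [MeasurableSpace Ω] (μ : Measure Ω) [IsProbabilityMeasure μ]
    (η : ℕ → Ω → ℝ) (hmeas : ∀ k, Measurable (η k))
    (hindep : iIndepFun η μ)
    (hident : ∀ k, IdentDistrib (η k) (η 1) μ μ)
    (hL2 : MemLp (η 1) 2 μ)
    (hmean : μ[η 1] = 0) (hvar : variance (η 1) μ = 1)
    (α : ℝ) (hα : -(1/2 : ℝ) < α) (ρ : ℝ) (hρ : 0 < ρ) :
    Tendsto (fun s : ℝ =>
        Real.sqrt (s ^ (1 + 2 * α) / Real.log (Real.log (1 / s))) *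
          ∑' k : ℕ, (if ⌊1 / s⌋₊ + 1 ≤ k then
              (k : ℝ) ^ (-(1/2 : ℝ) - s) * Real.log k ^ α *
                ∫ ω, (if ρ * (Real.log k ^ α)⁻¹ * (Real.log (1 / s))⁻¹ *
                    Real.sqrt ((k : ℝ) ^ (1 + s) / (s ^ (1 + 2 * α) * Real.log (Real.log (1 / s))))
                      < |η k ω| then |η k ω| else 0) ∂μ
            else 0))
      (nhdsWithin 0 (Set.Ioi 0)) (nhds 0) :=
  stmt10_general μ η hident hL2 α hα ρ hρ
end
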